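/- The supremum of I_A(μ) over all Borel probability measures μ on S satisfying ∫_S ⟨x, e_1⟩ dμ(x) = 0 equals Q_A := max{e^{λ_2}, cosh λ_1}. -/
import Mathlib


open MeasureTheory Real Filter Topology

noncomputable section

/-- The unit sphere `S = 𝕊^{d-1}` in `ℝ^d`. -/
abbrev Sph (d : ℕ) : Type := Metric.sphere (0 : EuclideanSpace ℝ (Fin d)) 1

variable {d : ℕ}

/-- The bilinear form `⟨x, A y⟩` for the diagonal matrix `A = diag lam`. -/
def qA (lam : Fin d → ℝ) (x y : EuclideanSpace ℝ (Fin d)) : ℝ :=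
  ∑ i, lam i * x i * y i

/-- The interaction kernel `K_A(x,y) = exp ⟨x, A y⟩`. -/
def Kker (lam : Fin d → ℝ) (x y : Sph d) : ℝ :=
  Real.exp (qA lam (x : EuclideanSpace ℝ (Fin d)) (y : EuclideanSpace ℝ (Fin d)))

/-- The interaction energy `I_A(μ)`. -/
def IA (lam : Fin d → ℝ) (μ : Measure (Sph d)) : ℝ :=
  ∫ x, ∫ y, Kker lam x y ∂μ ∂μ

/-- The potential `W_μ(x) = ∫ K_A(x,y) dμ(y)`. -/
def WA (lam : Fin d → ℝ) (μ : Measure (Sph d)) (x : Sph d) : ℝ :=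
  ∫ y, Kker lam x y ∂μ

open scoped Classical in
/-- Relative entropy of `μ` with respect to `ω`, with value `+∞` when `μ` is not
absolutely continuous w.r.t. `ω` or the entropy integral diverges. -/
def Ent (ω μ : Measure (Sph d)) : EReal :=
  if μ ≪ ω ∧ Integrable (fun x => Real.log (μ.rnDeriv ω x).toReal) μ
  then ((∫ x, Real.log (μ.rnDeriv ω x).toReal ∂μ : ℝ) : EReal)
  else ⊤

/-- The free energy `E_{ε,A}(μ) = ε·Ent(μ) − (1/2)·I_A(μ)`. -/
def EA (lam : Fin d → ℝ) (ω : Measure (Sph d)) (ε : ℝ) (μ : Measure (Sph d)) : EReal :=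
  (ε : EReal) * Ent ω μ - ((IA lam μ / 2 : ℝ) : EReal)

/-- The antipodal map on the sphere. -/
def antip (x : Sph d) : Sph d :=
  ⟨-(x : EuclideanSpace ℝ (Fin d)), by
    have hx := x.2
    rw [mem_sphere_zero_iff_norm] at hx ⊢
    rwa [norm_neg]⟩

/-- The sphere self-map induced by a linear isometry equivalence of `ℝ^d`. -/
def sphMap (g : EuclideanSpace ℝ (Fin d) ≃ₗᵢ[ℝ] EuclideanSpace ℝ (Fin d)) (x : Sph d) : Sph d :=
  ⟨g (x : EuclideanSpace ℝ (Fin d)), by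
    have hx := x.2
    rw [mem_sphere_zero_iff_norm] at hx ⊢
    rwa [g.norm_map]⟩

/-- `ω` is the uniform probability measure on the sphere, characterised as a
rotation-invariant Borel probability measure. -/
def IsUniform (ω : Measure (Sph d)) : Prop :=
  IsProbabilityMeasure ω ∧
  ∀ g : EuclideanSpace ℝ (Fin d) ≃ₗᵢ[ℝ] EuclideanSpace ℝ (Fin d),
    Measure.map (sphMap g) ω = ω

/-- The (topological) support of a measure. -/
def msupport (μ : Measure (Sph d)) : Set (Sph d) :=
  {x | ∀ U : Set (Sph d), IsOpen U → x ∈ U → 0 < μ U}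

/-- The set of global maximizers of the potential `W_ν`. -/
def argmaxW (lam : Fin d → ℝ) (ν : Measure (Sph d)) : Set (Sph d) :=
  {x | ∀ y, WA lam ν y ≤ WA lam ν x}

/-- `μ` is a Gibbs critical point of `E_{ε,A}`. -/
def IsGibbs (lam : Fin d → ℝ) (ω : Measure (Sph d)) (ε : ℝ) (μ : Measure (Sph d)) : Prop :=
  IsProbabilityMeasure μ ∧
  μ = ω.withDensity (fun x => ENNReal.ofReal
    (Real.exp (WA lam μ x / ε) / ∫ z, Real.exp (WA lam μ z / ε) ∂ω))

/-- `μ` is a global minimizer of `E_{ε,A}` over Borel probability measures. -/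
def IsMinimizer (lam : Fin d → ℝ) (ω : Measure (Sph d)) (ε : ℝ) (μ : Measure (Sph d)) : Prop :=
  IsProbabilityMeasure μ ∧
  ∀ ν : Measure (Sph d), IsProbabilityMeasure ν → EA lam ω ε μ ≤ EA lam ω ε ν

/-- `m_ε`, the infimum of the free energy over probability measures. -/
def mEps (lam : Fin d → ℝ) (ω : Measure (Sph d)) (ε : ℝ) : EReal :=
  sInf {r : EReal | ∃ μ : Measure (Sph d), IsProbabilityMeasure μ ∧ EA lam ω ε μ = r}

section Aux

variable {d : ℕ}

lemma sph_sum_sq (x : Sph d) :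
    ∑ i, ((x : EuclideanSpace ℝ (Fin d)) i) ^ 2 = 1 := by
  have hx : ‖(x : EuclideanSpace ℝ (Fin d))‖ = 1 := mem_sphere_zero_iff_norm.mp x.2
  rw [EuclideanSpace.norm_eq] at hx
  have h := Real.sqrt_eq_one.mp hx
  simpa [Real.norm_eq_abs, sq_abs] using h

lemma sph_coord_sq_le (x : Sph d) (i : Fin d) :
    ((x : EuclideanSpace ℝ (Fin d)) i) ^ 2 ≤ 1 := by
  have h := sph_sum_sq x
  have := Finset.single_le_sum (f := fun j => ((x : EuclideanSpace ℝ (Fin d)) j) ^ 2)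
    (fun j _ => sq_nonneg _) (Finset.mem_univ i)
  simpa [h] using this

lemma cont_coord (i : Fin d) :
    Continuous fun x : Sph d => (x : EuclideanSpace ℝ (Fin d)) i :=
  (EuclideanSpace.proj i).continuous.comp continuous_subtype_val

lemma cont_K_right (lam : Fin d → ℝ) (x : Sph d) :
    Continuous fun y : Sph d => Kker lam x y := by
  unfold Kker qA
  exact Real.continuous_exp.comp <| continuous_finset_sum _ fun i _ =>
    continuous_const.mul (cont_coord i)

lemma integrable_cont {f : Sph d → ℝ} (hf : Continuous f) (μ : Measure (Sph d))
    [IsFiniteMeasure μ] : Integrable f μ :=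
  hf.integrable_of_hasCompactSupport (HasCompactSupport.of_compactSpace f)

/-- Key pointwise bound: `K_A(x,y) ≤ Q_A + sinh(λ₀) x₀ y₀`. -/
lemma key_pointwise (lam : Fin d → ℝ) (i0 i1 : Fin d)
    (hle : ∀ i, i ≠ i0 → lam i ≤ lam i1) (hpos : ∀ i, 0 < lam i)
    (x y : Sph d) :
    Kker lam x y ≤ max (Real.exp (lam i1)) (Real.cosh (lam i0)) +
      (Real.sinh (lam i0) * ((x : EuclideanSpace ℝ (Fin d)) i0)) *
        ((y : EuclideanSpace ℝ (Fin d)) i0) := by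
  set s := (x : EuclideanSpace ℝ (Fin d)) i0 with hs
  set t := (y : EuclideanSpace ℝ (Fin d)) i0 with ht
  set u := s * t with hu
  have hs2 : s ^ 2 ≤ 1 := sph_coord_sq_le x i0
  have ht2 : t ^ 2 ≤ 1 := sph_coord_sq_le y i0
  have hau : |u| ≤ 1 := by
    rw [abs_le]
    constructor <;> nlinarith [sq_nonneg (s - t), sq_nonneg (s + t)]
  -- Step 1 : qA ≤ lam i0 * u + lam i1 * (1 - |u|)
  have hq : qA lam (x : EuclideanSpace ℝ (Fin d)) (y : EuclideanSpace ℝ (Fin d)) ≤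
      lam i0 * u + lam i1 * (1 - |u|) := by
    have hsplit : qA lam (x : EuclideanSpace ℝ (Fin d)) (y : EuclideanSpace ℝ (Fin d)) =
        lam i0 * s * t + ∑ i ∈ Finset.univ.erase i0,
          lam i * (x : EuclideanSpace ℝ (Fin d)) i * (y : EuclideanSpace ℝ (Fin d)) i := by
      rw [qA, ← Finset.add_sum_erase _ _ (Finset.mem_univ i0)]
    set X : ℝ := ∑ i ∈ Finset.univ.erase i0,
      |(x : EuclideanSpace ℝ (Fin d)) i| * |(y : EuclideanSpace ℝ (Fin d)) i| with hX
    have hXnn : 0 ≤ X := Finset.sum_nonneg fun i _ =>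
      mul_nonneg (abs_nonneg _) (abs_nonneg _)
    have htermle : ∑ i ∈ Finset.univ.erase i0,
        lam i * (x : EuclideanSpace ℝ (Fin d)) i * (y : EuclideanSpace ℝ (Fin d)) i ≤
        lam i1 * X := by
      rw [hX, Finset.mul_sum]
      apply Finset.sum_le_sum
      intro i hi
      have hne : i ≠ i0 := Finset.ne_of_mem_erase hi
      have h1 : lam i * (x : EuclideanSpace ℝ (Fin d)) i * (y : EuclideanSpace ℝ (Fin d)) i ≤
          lam i * (|(x : EuclideanSpace ℝ (Fin d)) i| * |(y : EuclideanSpace ℝ (Fin d)) i|) := by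
        rw [mul_assoc]
        refine mul_le_mul_of_nonneg_left ?_ (hpos i).le
        calc (x : EuclideanSpace ℝ (Fin d)) i * (y : EuclideanSpace ℝ (Fin d)) i
            ≤ |(x : EuclideanSpace ℝ (Fin d)) i * (y : EuclideanSpace ℝ (Fin d)) i| :=
              le_abs_self _
          _ = _ := abs_mul _ _
      exact h1.trans (mul_le_mul_of_nonneg_right (hle i hne)
        (mul_nonneg (abs_nonneg _) (abs_nonneg _)))
    have hsum_x : ∑ i ∈ Finset.univ.erase i0, |(x : EuclideanSpace ℝ (Fin d)) i| ^ 2 =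
        1 - s ^ 2 := by
      rw [Finset.sum_erase_eq_sub (Finset.mem_univ i0)]
      simp [sq_abs, sph_sum_sq x, hs]
    have hsum_y : ∑ i ∈ Finset.univ.erase i0, |(y : EuclideanSpace ℝ (Fin d)) i| ^ 2 =
        1 - t ^ 2 := by
      rw [Finset.sum_erase_eq_sub (Finset.mem_univ i0)]
      simp [sq_abs, sph_sum_sq y, ht]
    have hCS : X ^ 2 ≤ (1 - s ^ 2) * (1 - t ^ 2) := by
      rw [hX, ← hsum_x, ← hsum_y]
      exact Finset.sum_mul_sq_le_sq_mul_sq _ _ _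
    have hXle : X ≤ 1 - |u| := by
      have habs : |u| = |s| * |t| := by rw [hu, abs_mul]
      have hsq : X ^ 2 ≤ (1 - |u|) ^ 2 := by
        nlinarith [sq_nonneg (|s| - |t|), sq_abs s, sq_abs t]
      nlinarith [abs_nonneg u]
    calc qA lam (x : EuclideanSpace ℝ (Fin d)) (y : EuclideanSpace ℝ (Fin d))
        ≤ lam i0 * s * t + lam i1 * X := by rw [hsplit]; linarith
      _ ≤ lam i0 * u + lam i1 * (1 - |u|) := by
          have := mul_le_mul_of_nonneg_left hXle (hpos i1).le
          rw [hu]; rw [mul_assoc]; linarith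
  -- Step 2 : exp (lam i0 * u + lam i1 * (1 - |u|)) ≤ Q + sinh (lam i0) * u
  have hstep2 : Real.exp (lam i0 * u + lam i1 * (1 - |u|)) ≤
      max (Real.exp (lam i1)) (Real.cosh (lam i0)) + Real.sinh (lam i0) * u := by
    have hml : Real.exp (lam i1) ≤ max (Real.exp (lam i1)) (Real.cosh (lam i0)) :=
      le_max_left _ _
    have hmr : Real.cosh (lam i0) ≤ max (Real.exp (lam i1)) (Real.cosh (lam i0)) :=
      le_max_right _ _
    rcases le_or_gt 0 u with hu0 | hu0
    · rw [abs_of_nonneg hu0]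
      have hu1 : u ≤ 1 := le_trans (le_abs_self u) hau
      have hconv := convexOn_exp.2 (Set.mem_univ (lam i1)) (Set.mem_univ (lam i0))
        (by linarith : (0:ℝ) ≤ 1 - u) hu0 (by ring)
      simp only [smul_eq_mul] at hconv
      have heq : (1 - u) * lam i1 + u * lam i0 = lam i0 * u + lam i1 * (1 - u) := by ring
      rw [heq] at hconv
      have hch : Real.exp (lam i0) = Real.cosh (lam i0) + Real.sinh (lam i0) :=
        (Real.cosh_add_sinh _).symm
      nlinarith [hconv]
    · rw [abs_of_neg hu0]
      have hu1 : -1 ≤ u := neg_le_of_abs_le hau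
      have hconv := convexOn_exp.2 (Set.mem_univ (lam i1)) (Set.mem_univ (-(lam i0)))
        (by linarith : (0:ℝ) ≤ 1 + u) (by linarith : (0:ℝ) ≤ -u) (by ring)
      simp only [smul_eq_mul] at hconv
      have heq : (1 + u) * lam i1 + (-u) * (-(lam i0)) = lam i0 * u + lam i1 * (1 - -u) := by
        ring
      rw [heq] at hconv
      have hch : Real.exp (-(lam i0)) = Real.cosh (lam i0) - Real.sinh (lam i0) :=
        (Real.cosh_sub_sinh _).symm
      nlinarith [hconv]
  calc Kker lam x y ≤ Real.exp (lam i0 * u + lam i1 * (1 - |u|)) := Real.exp_le_exp.mpr hq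
    _ ≤ max (Real.exp (lam i1)) (Real.cosh (lam i0)) + Real.sinh (lam i0) * u := hstep2
    _ = _ := by rw [hu]; ring

end Aux

section Aux2

variable {d : ℕ}

lemma cont_K_left (lam : Fin d → ℝ) (y : Sph d) :
    Continuous fun x : Sph d => Kker lam x y := by
  unfold Kker qA
  exact Real.continuous_exp.comp <| continuous_finset_sum _ fun i _ =>
    (continuous_const.mul (cont_coord i)).mul continuous_const

/-- Upper bound: if the first moment vanishes then `I_A(μ) ≤ Q_A`. -/
lemma IA_le (lam : Fin d → ℝ) (i0 i1 : Fin d)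
    (hle : ∀ i, i ≠ i0 → lam i ≤ lam i1) (hpos : ∀ i, 0 < lam i)
    (μ : Measure (Sph d)) [IsProbabilityMeasure μ]
    (hmom : ∫ x : Sph d, (x : EuclideanSpace ℝ (Fin d)) i0 ∂μ = 0) :
    IA lam μ ≤ max (Real.exp (lam i1)) (Real.cosh (lam i0)) := by
  set Q := max (Real.exp (lam i1)) (Real.cosh (lam i0)) with hQ
  have hW : ∀ x : Sph d, WA lam μ x ≤ Q := by
    intro x
    have hint1 : Integrable (fun y => Kker lam x y) μ :=
      integrable_cont (cont_K_right lam x) μ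
    have hcoord : Integrable (fun y : Sph d => (y : EuclideanSpace ℝ (Fin d)) i0) μ :=
      integrable_cont (cont_coord i0) μ
    have hint2 : Integrable (fun y : Sph d => Q +
        (Real.sinh (lam i0) * ((x : EuclideanSpace ℝ (Fin d)) i0)) *
        ((y : EuclideanSpace ℝ (Fin d)) i0)) μ :=
      (integrable_const Q).add (hcoord.const_mul _)
    have hmono := integral_mono hint1 hint2 (fun y => key_pointwise lam i0 i1 hle hpos x y)
    have hcomp : (∫ y : Sph d, (Q +
        (Real.sinh (lam i0) * ((x : EuclideanSpace ℝ (Fin d)) i0)) *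
        ((y : EuclideanSpace ℝ (Fin d)) i0)) ∂μ) = Q := by
      rw [integral_add (integrable_const Q) (hcoord.const_mul _), integral_const,
        integral_const_mul _ _, hmom]
      simp
    rw [WA]
    exact hmono.trans hcomp.le
  have hWnn : ∀ x : Sph d, 0 ≤ WA lam μ x := fun x =>
    integral_nonneg fun y => (Real.exp_pos _).le
  have hIA : IA lam μ = ∫ x, WA lam μ x ∂μ := rfl
  rw [hIA]
  calc (∫ x, WA lam μ x ∂μ) ≤ ∫ _x : Sph d, Q ∂μ :=
      integral_mono_of_nonneg (ae_of_all _ hWnn) (integrable_const Q) (ae_of_all _ hW)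
    _ = Q := by simp

/-- The point `e_i` on the sphere. -/
def sphPt (hd : 0 < d) (i : Fin d) : Sph d :=
  ⟨EuclideanSpace.single i 1, by
    rw [mem_sphere_zero_iff_norm, EuclideanSpace.norm_single]; norm_num⟩

/-- The point `-e_i` on the sphere. -/
def sphPtNeg (hd : 0 < d) (i : Fin d) : Sph d :=
  ⟨-EuclideanSpace.single i 1, by
    rw [mem_sphere_zero_iff_norm, norm_neg, EuclideanSpace.norm_single]; norm_num⟩

lemma qA_single_single (lam : Fin d → ℝ) (i : Fin d) :
    qA lam (EuclideanSpace.single i (1:ℝ)) (EuclideanSpace.single i (1:ℝ)) = lam i := by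
  rw [qA, Finset.sum_eq_single i]
  · simp
  · intro j _ hj; simp [EuclideanSpace.single_apply, hj]
  · simp

lemma qA_neg_right (lam : Fin d → ℝ) (v w : EuclideanSpace ℝ (Fin d)) :
    qA lam v (-w) = -qA lam v w := by
  simp [qA, mul_neg, Finset.sum_neg_distrib]

lemma qA_neg_left (lam : Fin d → ℝ) (v w : EuclideanSpace ℝ (Fin d)) :
    qA lam (-v) w = -qA lam v w := by
  simp [qA, mul_neg, neg_mul, Finset.sum_neg_distrib]

lemma integral_two_point (p q : Sph d) (f : Sph d → ℝ) (hf : Continuous f) :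
    (∫ x, f x ∂((2⁻¹ : ENNReal) • Measure.dirac p + (2⁻¹ : ENNReal) • Measure.dirac q)) =
      (f p + f q) / 2 := by
  have h1 : Integrable f ((2⁻¹ : ENNReal) • Measure.dirac p) :=
    (integrable_cont hf _).smul_measure (by norm_num)
  have h2 : Integrable f ((2⁻¹ : ENNReal) • Measure.dirac q) :=
    (integrable_cont hf _).smul_measure (by norm_num)
  rw [integral_add_measure h1 h2, integral_smul_measure, integral_smul_measure,
    integral_dirac, integral_dirac]
  simp only [ENNReal.toReal_inv, ENNReal.toReal_ofNat, smul_eq_mul]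
  ring

end Aux2

/-- the supremum of `I_A` over probability measures with vanishing
first moment in the `e₁` direction equals `Q_A`. -/
theorem stmt7 (d : ℕ) (hd : 2 ≤ d) (lam : Fin d → ℝ)
    (hanti : Antitone lam)
    (hgap : lam ⟨1, by omega⟩ < lam ⟨0, by omega⟩)
    (hpos : ∀ i, 0 < lam i) :
    IsLUB {r : ℝ | ∃ μ : Measure (Sph d), IsProbabilityMeasure μ ∧
        (∫ x : Sph d, (x : EuclideanSpace ℝ (Fin d)) ⟨0, by omega⟩ ∂μ) = 0 ∧
        IA lam μ = r}
      (max (Real.exp (lam ⟨1, by omega⟩)) (Real.cosh (lam ⟨0, by omega⟩))) := by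
  have h0d : 0 < d := by omega
  have h1d : 1 < d := by omega
  have hle : ∀ i : Fin d, i ≠ (⟨0, h0d⟩ : Fin d) → lam i ≤ lam ⟨1, h1d⟩ := by
    intro i hi
    apply hanti
    rw [Fin.le_def]
    have hnz : (i : ℕ) ≠ 0 := by
      intro h
      exact hi (Fin.ext (by simpa using h))
    show 1 ≤ (i : ℕ)
    omega
  have hne : (⟨0, h0d⟩ : Fin d) ≠ (⟨1, h1d⟩ : Fin d) := Fin.ne_of_val_ne (by norm_num)
  constructor
  · -- upper bound
    rintro r ⟨μ, hμ, hmom, rfl⟩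
    exact IA_le lam ⟨0, h0d⟩ ⟨1, h1d⟩ hle hpos μ hmom
  · -- least upper bound: both candidate values are attained
    intro b hb
    apply max_le
    · -- value exp (lam i1) via δ_{e₂}
      refine hb ⟨Measure.dirac (sphPt h0d ⟨1, h1d⟩), inferInstance, ?_, ?_⟩
      · rw [integral_dirac]
        simp [sphPt, EuclideanSpace.single_apply, hne]
      · rw [IA, integral_dirac, integral_dirac]
        simp [Kker, sphPt, qA_single_single]
    · -- value cosh (lam i0) via (δ_{e₁} + δ_{-e₁})/2
      set p := sphPt h0d (⟨0, h0d⟩ : Fin d) with hp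
      set q := sphPtNeg h0d (⟨0, h0d⟩ : Fin d) with hq
      set μ3 : Measure (Sph d) :=
        (2⁻¹ : ENNReal) • Measure.dirac p + (2⁻¹ : ENNReal) • Measure.dirac q with hμ3
      have hprob : IsProbabilityMeasure μ3 := by
        constructor
        simp [hμ3, ENNReal.inv_two_add_inv_two]
      refine hb ⟨μ3, hprob, ?_, ?_⟩
      · rw [hμ3, integral_two_point p q _ (cont_coord _)]
        simp [hp, hq, sphPt, sphPtNeg]
      · have hinner : ∀ x : Sph d, (∫ y, Kker lam x y ∂μ3) =
            (Kker lam x p + Kker lam x q) / 2 := fun x =>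
          integral_two_point p q _ (cont_K_right lam x)
        have hKpp : Kker lam p p = Real.exp (lam ⟨0, h0d⟩) := by
          simp [Kker, hp, sphPt, qA_single_single]
        have hKpq : Kker lam p q = Real.exp (-lam ⟨0, h0d⟩) := by
          simp [Kker, hp, hq, sphPt, sphPtNeg, qA_neg_right, qA_single_single]
        have hKqp : Kker lam q p = Real.exp (-lam ⟨0, h0d⟩) := by
          simp [Kker, hp, hq, sphPt, sphPtNeg, qA_neg_left, qA_single_single]
        have hKqq : Kker lam q q = Real.exp (lam ⟨0, h0d⟩) := by
          simp [Kker, hq, sphPtNeg, qA_neg_left, qA_neg_right, qA_single_single]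
        have : IA lam μ3 = ((Kker lam p p + Kker lam p q) / 2 +
            (Kker lam q p + Kker lam q q) / 2) / 2 := by
          rw [IA]
          simp only [hinner]
          exact integral_two_point p q _
            (((cont_K_left lam p).add (cont_K_left lam q)).div_const 2)
        rw [this, hKpp, hKpq, hKqp, hKqq, Real.cosh_eq]
        ring

end
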